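/- Let a > 0, β > 0 and 0 < e < 1. The average over the mean anomaly of the quantity ṙ²/r along a Kepler ellipse of semi-major axis a and eccentricity e, where the squared radial velocity is ṙ² = β e² sin²E/(a(1 − e·cos E)²), equals (β/a²)(1/√(1 − e²) − 1); explicitly, (1/(2π)) ∫₀^{2π} (β e² sin²E/(a(1 − e·cos E)²))·(1/(a(1 − e·cos E)))·(1 − e·cos E) dE = (β/a²)(1/√(1 − e²) − 1). -/

import Mathlib

open Real

/-!
Writing `u = 1 - e cos E` and `s = √(1 - e²)`, one has `e² sin² E = 2u - u² - s²`, so the averaged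
quantity is `(β/a²)(2/u - 1 - s²/u²)`. Since `d/dE (e sin E / u) = s²/u² - 1/u`, the integrand equals
`(β/a²)(1/u - 1)` up to the derivative of a `2π`-periodic function, and `1/u` is `1/s` times
the derivative of the true anomaly, which gains exactly `2π` over one revolution.
-/

variable {e : ℝ}

/-- The true anomaly in terms of the eccentric anomaly, written as
`E + 2 arctan (b sin E / (1 - b cos E))` with `b = e / (1 + √(1 - e²))` so that, unlike
`2 arctan (√((1 + e) / (1 - e)) tan (E / 2))`, it is continuous in `E`. -/
noncomputable def trueAnomaly (e E : ℝ) : ℝ :=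
  E + 2 * arctan (e * sin E / (1 + √(1 - e ^ 2) - e * cos E))

@[simp]
lemma trueAnomaly_zero : trueAnomaly e 0 = 0 := by
  simp [trueAnomaly]

@[simp]
lemma trueAnomaly_two_pi : trueAnomaly e (2 * π) = 2 * π := by
  simp [trueAnomaly]

lemma one_sub_mul_cos_pos (he : |e| < 1) (x : ℝ) : 0 < 1 - e * cos x := by
  have : e * cos x ≤ |e| := by
    calc e * cos x ≤ |e * cos x| := le_abs_self _
      _ = |e| * |cos x| := abs_mul e (cos x)
      _ ≤ |e| := mul_le_of_le_one_right (abs_nonneg e) (abs_cos_le_one x)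
  linarith

lemma one_add_sqrt_sub_mul_cos_pos (he : |e| < 1) (x : ℝ) :
    0 < 1 + √(1 - e ^ 2) - e * cos x := by
  linarith [one_sub_mul_cos_pos he x, sqrt_nonneg (1 - e ^ 2)]

lemma sqrt_one_sub_sq_pos (he : |e| < 1) : 0 < √(1 - e ^ 2) := by
  apply sqrt_pos.mpr
  nlinarith [abs_nonneg e, sq_abs e]

lemma hasDerivAt_trueAnomaly (he : |e| < 1) (x : ℝ) :
    HasDerivAt (trueAnomaly e) (√(1 - e ^ 2) / (1 - e * cos x)) x := by
  have hu := one_sub_mul_cos_pos he x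
  have hD := one_add_sqrt_sub_mul_cos_pos he x
  have hs0 := sqrt_nonneg (1 - e ^ 2)
  set s := √(1 - e ^ 2)
  have hs : s ^ 2 = 1 - e ^ 2 := sq_sqrt (by nlinarith [sq_abs e, abs_nonneg e])
  have hsc := sin_sq_add_cos_sq x
  have hquot : HasDerivAt (fun y => e * sin y / (1 + s - e * cos y))
      ((e * cos x * (1 + s - e * cos x) - e * sin x * (e * sin x)) / (1 + s - e * cos x) ^ 2) x := by
    have hnum := (hasDerivAt_sin x).const_mul e
    have hden := ((hasDerivAt_cos x).const_mul e).const_sub (1 + s)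
    simp only [mul_neg, neg_neg] at hden
    exact hnum.div hden hD.ne'
  refine ((hasDerivAt_id' x).add (hquot.arctan.const_mul 2)).congr_deriv ?_
  have hsq : 1 + (e * sin x / (1 + s - e * cos x)) ^ 2
      = 2 * (1 + s) * (1 - e * cos x) / (1 + s - e * cos x) ^ 2 := by
    field_simp
    linear_combination e ^ 2 * hsc + hs
  rw [hsq]
  field_simp
  linear_combination (-e ^ 2) * hsc - hs

lemma hasDerivAt_mul_sin_div_one_sub_mul_cos {x : ℝ} (hx : 1 - e * cos x ≠ 0) :
    HasDerivAt (fun E => e * sin E / (1 - e * cos E))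
      ((1 - e ^ 2) / (1 - e * cos x) ^ 2 - (1 - e * cos x)⁻¹) x := by
  have hnum := (hasDerivAt_sin x).const_mul e
  have hden := ((hasDerivAt_cos x).const_mul e).const_sub 1
  simp only [mul_neg, neg_neg] at hden
  refine (hnum.div hden hx).congr_deriv ?_
  field_simp
  linear_combination (-e ^ 2) * sin_sq_add_cos_sq x

lemma integral_sq_mul_sin_sq_div_one_sub_mul_cos_sq (he : |e| < 1) :
    ∫ E in (0 : ℝ)..(2 * π), e ^ 2 * sin E ^ 2 / (1 - e * cos E) ^ 2
      = 2 * π * (1 / √(1 - e ^ 2) - 1) := by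
  have hu := one_sub_mul_cos_pos he
  have hs := sqrt_one_sub_sq_pos he
  set s := √(1 - e ^ 2)
  have hderiv : ∀ x, HasDerivAt (fun E => trueAnomaly e E / s - E - e * sin E / (1 - e * cos E))
      (e ^ 2 * sin x ^ 2 / (1 - e * cos x) ^ 2) x := by
    intro x
    refine ((((hasDerivAt_trueAnomaly he x).div_const s).sub (hasDerivAt_id' x)).sub
      (hasDerivAt_mul_sin_div_one_sub_mul_cos (hu x).ne')).congr_deriv ?_
    have := (hu x).ne'
    field_simp
    linear_combination (-e ^ 2 * s) * sin_sq_add_cos_sq x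
  have hcont : Continuous fun E => e ^ 2 * sin E ^ 2 / (1 - e * cos E) ^ 2 := by
    fun_prop (disch := exact fun E => (pow_pos (hu E) 2).ne')
  rw [intervalIntegral.integral_eq_sub_of_hasDerivAt (fun x _ => hderiv x)
    (hcont.intervalIntegrable _ _)]
  simp only [trueAnomaly_two_pi, trueAnomaly_zero, sin_two_pi, cos_two_pi, sin_zero, cos_zero,
    mul_zero, mul_one, zero_div, sub_zero, sub_self, one_div]
  field_simp

theorem kepler_mean_anomaly_average_rdot_sq_over_r_general (a β e : ℝ) (ha : 0 < a)
    (he0 : 0 < e) (he1 : e < 1) :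
    (1 / (2 * π)) * ∫ E in (0:ℝ)..(2 * π),
        (β * e ^ 2 * Real.sin E ^ 2 / (a * (1 - e * Real.cos E) ^ 2))
          * (1 / (a * (1 - e * Real.cos E))) * (1 - e * Real.cos E) =
      (β / a ^ 2) * (1 / Real.sqrt (1 - e ^ 2) - 1) := by
  have he : |e| < 1 := abs_lt.mpr ⟨by linarith, he1⟩
  have hintegrand : ∀ E, (β * e ^ 2 * sin E ^ 2 / (a * (1 - e * cos E) ^ 2))
      * (1 / (a * (1 - e * cos E))) * (1 - e * cos E)
      = β / a ^ 2 * (e ^ 2 * sin E ^ 2 / (1 - e * cos E) ^ 2) := by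
    intro E
    have := (one_sub_mul_cos_pos he E).ne'
    field_simp
  simp_rw [hintegrand, intervalIntegral.integral_const_mul, integral_sq_mul_sin_sq_div_one_sub_mul_cos_sq he]
  field_simp

/-- Let `a > 0`, `β > 0` and `0 < e < 1`. The average over the mean anomaly of `ṙ²/r` along a
Kepler ellipse of semi-major axis `a` and eccentricity `e`, where
`ṙ² = β e² sin²E/(a(1 − e·cos E)²)`, equals `(β/a²)(1/√(1 − e²) − 1)`:
`(1/(2π)) ∫₀^{2π} (β e² sin²E/(a(1 − e·cos E)²))·(1/(a(1 − e·cos E)))·(1 − e·cos E) dE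
  = (β/a²)(1/√(1 − e²) − 1)`. -/
theorem kepler_mean_anomaly_average_rdot_sq_over_r (a β e : ℝ) (ha : 0 < a) (hβ : 0 < β)
    (he0 : 0 < e) (he1 : e < 1) :
    (1 / (2 * π)) * ∫ E in (0:ℝ)..(2 * π),
        (β * e ^ 2 * Real.sin E ^ 2 / (a * (1 - e * Real.cos E) ^ 2))
          * (1 / (a * (1 - e * Real.cos E))) * (1 - e * Real.cos E) =
      (β / a ^ 2) * (1 / Real.sqrt (1 - e ^ 2) - 1) :=
  kepler_mean_anomaly_average_rdot_sq_over_r_general a β e ha he0 he1
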